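/- The probability of strict-dominance solvability of G(2,n) is strictly decreasing in n: for every n ≥ 1, π(2,n+1) < π(2,n). -/

import Mathlib

open Finset Filter

noncomputable section

/-- Row action `i` is strictly dominated in the restricted game with Row actions `X`
and Column actions `Y`, for Row payoff matrix `R`. -/
def RowDomIn {m n : ℕ} (R : Fin m → Fin n → ℝ) (X : Finset (Fin m)) (Y : Finset (Fin n))
    (i : Fin m) : Prop :=
  ∃ i' ∈ X, ∀ j ∈ Y, R i j < R i' j

/-- Column action `j` is strictly dominated in the restricted game with Row actions `X`
and Column actions `Y`, for Column payoff matrix `C`. -/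
def ColDomIn {m n : ℕ} (C : Fin m → Fin n → ℝ) (X : Finset (Fin m)) (Y : Finset (Fin n))
    (j : Fin n) : Prop :=
  ∃ j' ∈ Y, ∀ i ∈ X, C i j < C i j'

open Classical in
/-- One round of iterated elimination: simultaneously delete every strictly dominated
action of both players in the current restricted game. -/
def elimStep {m n : ℕ} (R C : Fin m → Fin n → ℝ)
    (p : Finset (Fin m) × Finset (Fin n)) : Finset (Fin m) × Finset (Fin n) :=
  (p.1.filter fun i => ¬ RowDomIn R p.1 p.2 i,
   p.2.filter fun j => ¬ ColDomIn C p.1 p.2 j)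

/-- Surviving actions of the subgame `(p.1, p.2)` after iterated elimination of strictly
dominated actions (iterating `m + n` times surely reaches the fixed point). -/
def survivorsFrom {m n : ℕ} (R C : Fin m → Fin n → ℝ)
    (p : Finset (Fin m) × Finset (Fin n)) : Finset (Fin m) × Finset (Fin n) :=
  (elimStep R C)^[m + n] p

/-- The subgame `(p.1, p.2)` is strict-dominance solvable: exactly one action of each
player survives iterated elimination of strictly dominated actions. -/
def SolvableFrom {m n : ℕ} (R C : Fin m → Fin n → ℝ)
    (p : Finset (Fin m) × Finset (Fin n)) : Prop :=
  (survivorsFrom R C p).1.card = 1 ∧ (survivorsFrom R C p).2.card = 1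

/-- Surviving actions of the full game after iterated elimination. -/
def survivors {m n : ℕ} (R C : Fin m → Fin n → ℝ) : Finset (Fin m) × Finset (Fin n) :=
  survivorsFrom R C (Finset.univ, Finset.univ)

/-- The game is strict-dominance solvable. -/
def Solvable {m n : ℕ} (R C : Fin m → Fin n → ℝ) : Prop :=
  SolvableFrom R C (Finset.univ, Finset.univ)

/-- The number of rounds performed by the iterated elimination procedure:
the least `k` such that round `k + 1` deletes nothing more. -/
def elimRounds {m n : ℕ} (R C : Fin m → Fin n → ℝ) : ℕ :=
  sInf {k | (elimStep R C)^[k + 1] (Finset.univ, Finset.univ)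
          = (elimStep R C)^[k] (Finset.univ, Finset.univ)}

/-- Sample space of the random game `G(m,n)`: for each Column action an i.i.d. uniform
permutation giving Row's ordinal payoffs in that column, and for each Row action an
i.i.d. uniform permutation giving Column's ordinal payoffs in that row. -/
abbrev Omega (m n : ℕ) := (Fin n → Equiv.Perm (Fin m)) × (Fin m → Equiv.Perm (Fin n))

/-- Row's payoff matrix of the realized game. -/
def RPay {m n : ℕ} (ω : Omega m n) : Fin m → Fin n → ℝ := fun i j => ((ω.1 j) i : ℕ)

/-- Column's payoff matrix of the realized game. -/
def CPay {m n : ℕ} (ω : Omega m n) : Fin m → Fin n → ℝ := fun i j => ((ω.2 i) j : ℕ)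

/-- Probability of an event under the uniform distribution on `Omega m n`
(i.e. all `m + n` permutations uniform and mutually independent). -/
def Pr {m n : ℕ} (E : Set (Omega m n)) : ℝ :=
  (E.toFinite.toFinset.card : ℝ) / (Fintype.card (Omega m n) : ℝ)

open Classical in
/-- Number of Row actions that are not strictly dominated. -/
def UR {m n : ℕ} (ω : Omega m n) : ℕ :=
  (Finset.univ.filter fun i => ¬ RowDomIn (RPay ω) Finset.univ Finset.univ i).card

open Classical in
/-- Number of Column actions that are not strictly dominated. -/
def UC {m n : ℕ} (ω : Omega m n) : ℕ :=
  (Finset.univ.filter fun j => ¬ ColDomIn (CPay ω) Finset.univ Finset.univ j).card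

/-- Number of Row actions surviving iterated elimination. -/
def SR {m n : ℕ} (ω : Omega m n) : ℕ := (survivors (RPay ω) (CPay ω)).1.card

/-- Number of Column actions surviving iterated elimination. -/
def SC {m n : ℕ} (ω : Omega m n) : ℕ := (survivors (RPay ω) (CPay ω)).2.card

/-- The realized game is strict-dominance solvable. -/
def GameSolvable {m n : ℕ} (ω : Omega m n) : Prop := Solvable (RPay ω) (CPay ω)

/-- Number of rounds of the iterated elimination procedure in the realized game. -/
def GameRounds {m n : ℕ} (ω : Omega m n) : ℕ := elimRounds (RPay ω) (CPay ω)

/-- `π(m,n)`: probability that the random game `G(m,n)` is strict-dominance solvable. -/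
def probSolvable (m n : ℕ) : ℝ := Pr {ω : Omega m n | GameSolvable ω}

/-- Expected number of Column's strictly undominated actions, `E[U^C(m,n)]`. -/
def expUC (m n : ℕ) : ℝ :=
  (∑ ω : Omega m n, (UC ω : ℝ)) / (Fintype.card (Omega m n) : ℝ)

/-- Expected number of Column actions surviving iterated elimination, `E[S^C(m,n)]`. -/
def expSC (m n : ℕ) : ℝ :=
  (∑ ω : Omega m n, (SC ω : ℝ)) / (Fintype.card (Omega m n) : ℝ)

open Classical in
/-- `E[I(m,n)]`: expected number of elimination rounds conditional on the game being
strict-dominance solvable. -/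
def condExpRounds (m n : ℕ) : ℝ :=
  (∑ ω : Omega m n, if GameSolvable ω then (GameRounds ω : ℝ) else 0) /
    (∑ ω : Omega m n, if GameSolvable ω then (1 : ℝ) else 0)

/-- Unsigned Stirling numbers of the first kind. -/
def stirling1 : ℕ → ℕ → ℕ
  | 0, 0 => 1
  | 0, _ + 1 => 0
  | _ + 1, 0 => 0
  | n + 1, k + 1 => n * stirling1 n (k + 1) + stirling1 n k

end


/-!
In a `2 × n` game, Column's actions that are undominated against both rows form the Pareto
frontier `F` of Column's two payoff rows, and Row's dominance only depends on which row is worse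
in each column. Iterated elimination is therefore successful exactly when the same row is worse
in every column of `F`: that row goes, and Column's best reply to the other one is left. For a
given Column matrix this happens for `2 * 2 ^ (n - #F)` of the `2 ^ n` Row matrices.

Reindexing columns by Column's first payoff row, `#F` becomes the number of right-to-left maxima
of a permutation, and prepending an entry to a permutation shows
`∑ σ, 2 ^ (n - #maxima σ) = 1 * 3 * ⋯ * (2n - 1)`. Hence `π(2,n) = 2 (2n-1)!! / (2^n n!)` and
`π(2,n+1) / π(2,n) = (2n+1) / (2n+2) < 1`.
-/

namespace Equiv.Perm

variable {n : ℕ}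

def rightToLeftMaxima (π : Perm (Fin n)) : Finset (Fin n) :=
  Finset.univ.filter fun v => ¬ ∃ w, v < w ∧ π v < π w

/-- `0 ↦ q` and `v.succ ↦ q.succAbove (π v)`: a new first entry `q` in front of `π`,
whose values are shifted around `q`. -/
def insertAtZero (q : Fin (n + 1)) (π : Perm (Fin n)) : Perm (Fin (n + 1)) :=
  (finSuccEquiv' 0).trans (π.optionCongr.trans (finSuccEquiv' q).symm)

@[simp]
lemma insertAtZero_zero (q : Fin (n + 1)) (π : Perm (Fin n)) : insertAtZero q π 0 = q := by
  simp [insertAtZero]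

@[simp]
lemma insertAtZero_succ (q : Fin (n + 1)) (π : Perm (Fin n)) (v : Fin n) :
    insertAtZero q π v.succ = q.succAbove (π v) := by
  simp [insertAtZero, Equiv.symm_apply_eq]

lemma insertAtZero_bijective :
    Function.Bijective fun p : Fin (n + 1) × Perm (Fin n) => insertAtZero p.1 p.2 := by
  refine (Fintype.bijective_iff_injective_and_card _).2 ⟨?_, ?_⟩
  · rintro ⟨q, π⟩ ⟨q', π'⟩ h
    have hq : q = q' := by simpa using DFunLike.congr_fun h 0
    subst hq
    have hπ : π = π' := Equiv.ext fun v =>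
      (Fin.succAbove_right_injective (p := q)) (by simpa using DFunLike.congr_fun h v.succ)
    rw [hπ]
  · simp [Fintype.card_perm, Nat.factorial_succ]

lemma zero_mem_rightToLeftMaxima_insertAtZero (q : Fin (n + 1)) (π : Perm (Fin n)) :
    0 ∈ (insertAtZero q π).rightToLeftMaxima ↔ q = Fin.last n := by
  simp only [rightToLeftMaxima, mem_filter, mem_univ, true_and, Fin.exists_fin_succ, lt_irrefl,
    false_and, insertAtZero_zero, insertAtZero_succ, Fin.succ_pos, false_or, not_exists, not_lt]
  constructor
  · intro h
    by_contra hq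
    obtain ⟨u, rfl⟩ := Fin.exists_castSucc_eq.2 hq
    simpa using h (π.symm u)
  · rintro rfl v
    simp [(Fin.castSucc_lt_last _).le]

lemma succ_mem_rightToLeftMaxima_insertAtZero (q : Fin (n + 1)) (π : Perm (Fin n)) (v : Fin n) :
    v.succ ∈ (insertAtZero q π).rightToLeftMaxima ↔ v ∈ π.rightToLeftMaxima := by
  simp [rightToLeftMaxima, Fin.exists_fin_succ]

lemma card_rightToLeftMaxima_insertAtZero (q : Fin (n + 1)) (π : Perm (Fin n)) :
    #(insertAtZero q π).rightToLeftMaxima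
      = (if q = Fin.last n then 1 else 0) + #π.rightToLeftMaxima := by
  have card_eq_sum {k : ℕ} (s : Finset (Fin k)) : #s = ∑ x, if x ∈ s then 1 else 0 := by simp
  rw [card_eq_sum, card_eq_sum π.rightToLeftMaxima, Fin.sum_univ_succ]
  simp only [zero_mem_rightToLeftMaxima_insertAtZero, succ_mem_rightToLeftMaxima_insertAtZero]

theorem sum_two_pow_sub_card_rightToLeftMaxima (n : ℕ) :
    ∑ π : Perm (Fin n), 2 ^ (n - #π.rightToLeftMaxima) = ∏ k ∈ range n, (2 * k + 1) := by
  induction n with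
  | zero => simp
  | succ n ih =>
    have summand (q : Fin (n + 1)) (π : Perm (Fin n)) :
        2 ^ (n + 1 - #(insertAtZero q π).rightToLeftMaxima)
          = (if q = Fin.last n then 1 else 2) * 2 ^ (n - #π.rightToLeftMaxima) := by
      have h_le : #π.rightToLeftMaxima ≤ n := by simpa using card_le_univ π.rightToLeftMaxima
      rw [card_rightToLeftMaxima_insertAtZero]
      split_ifs
      · rw [one_mul, Nat.add_comm n, Nat.add_sub_add_left]
      · rw [← pow_succ', zero_add, Nat.sub_add_comm h_le]
    rw [← insertAtZero_bijective.sum_comp, Fintype.sum_prod_type, prod_range_succ, ← ih]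
    simp only [summand, ← mul_sum, Fin.sum_univ_castSucc, (Fin.castSucc_lt_last _).ne,
      if_false, if_true, sum_const, card_univ, Fintype.card_fin, smul_eq_mul]
    ring

lemma fin_two_apply_lt_apply_add_one_iff :
    ∀ (g : Perm (Fin 2)) (i : Fin 2), g i < g (i + 1) ↔ g 0 = i := by
  decide

lemma card_filter_fin_two_apply_zero_eq :
    ∀ x : Fin 2, #(univ.filter fun g : Perm (Fin 2) => g 0 = x) = 1 := by
  decide

end Equiv.Perm

section Elimination

variable {m n : ℕ} (R C : Fin m → Fin n → ℝ)

lemma elimStep_singleton_singleton (i : Fin m) (j : Fin n) :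
    elimStep R C ({i}, {j}) = ({i}, {j}) := by
  simp [elimStep, RowDomIn, ColDomIn]

lemma survivorsFrom_eq_of_iterate_eq {k : ℕ} {p q : Finset (Fin m) × Finset (Fin n)}
    (hk : k ≤ m + n) (hpq : (elimStep R C)^[k] p = q) (hq : elimStep R C q = q) :
    survivorsFrom R C p = q := by
  rw [survivorsFrom, ← Nat.sub_add_cancel hk, Function.iterate_add_apply, hpq,
    Function.iterate_fixed hq]

variable {R} in
lemma RowDomIn.of_subset {X : Finset (Fin m)} {Y Y' : Finset (Fin n)} {i : Fin m}
    (h : RowDomIn R X Y i) (hY : Y' ⊆ Y) : RowDomIn R X Y' i :=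
  let ⟨i', hi', hlt⟩ := h
  ⟨i', hi', fun j hj => hlt j (hY hj)⟩

end Elimination

section ParetoFrontier

variable {n : ℕ} {α : Type*} [LinearOrder α]

def paretoFrontier (C : Fin 2 → Fin n → α) : Finset (Fin n) :=
  univ.filter fun j => ¬ ∃ j', C 0 j < C 0 j' ∧ C 1 j < C 1 j'

lemma paretoFrontier_nonempty (hn : 0 < n) (C : Fin 2 → Fin n → α) :
    (paretoFrontier C).Nonempty := by
  have : Nonempty (Fin n) := Fin.pos_iff_nonempty.1 hn
  obtain ⟨j, -, hj⟩ := univ.exists_max_image (C 0) univ_nonempty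
  exact ⟨j, mem_filter.2 ⟨mem_univ _, fun ⟨j', h, _⟩ => (hj j' (mem_univ _)).not_gt h⟩⟩

lemma paretoFrontier_comp_strictMono {β : Type*} [LinearOrder β] {f : α → β}
    (hf : StrictMono f) (C : Fin 2 → Fin n → α) :
    paretoFrontier (fun i j => f (C i j)) = paretoFrontier C := by
  simp [paretoFrontier, hf.lt_iff_lt]

lemma card_paretoFrontier_eq_card_rightToLeftMaxima (b : Fin 2 → Equiv.Perm (Fin n)) :
    #(paretoFrontier (b · ·)) = #(b 1 * (b 0)⁻¹).rightToLeftMaxima := by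
  refine card_equiv (b 0) fun j => ?_
  simp only [paretoFrontier, Equiv.Perm.rightToLeftMaxima, mem_filter, mem_univ, true_and]
  conv_rhs => rw [(b 0).surjective.exists]
  simp [Equiv.Perm.mul_apply]

end ParetoFrontier

lemma fin_two_eq_or_eq_add_one : ∀ i x : Fin 2, i = x ∨ i = x + 1 := by decide

lemma fin_two_add_one_add_one : ∀ x : Fin 2, x + 1 + 1 = x := by decide

lemma fin_two_add_one_ne : ∀ x : Fin 2, x + 1 ≠ x := by decide

section TwoRowGames

variable {n : ℕ} (R C : Fin 2 → Fin n → ℝ)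

lemma rowDomIn_two_iff {X : Finset (Fin 2)} {Y : Finset (Fin n)} (hY : Y.Nonempty) (i : Fin 2) :
    RowDomIn R X Y i ↔ i + 1 ∈ X ∧ ∀ j ∈ Y, R i j < R (i + 1) j := by
  refine ⟨fun ⟨i', hi', hlt⟩ => ?_, fun ⟨hi, hlt⟩ => ⟨i + 1, hi, hlt⟩⟩
  obtain ⟨j, hj⟩ := hY
  obtain rfl | rfl := fin_two_eq_or_eq_add_one i' i
  · exact absurd (hlt j hj) (lt_irrefl _)
  · exact ⟨hi', hlt⟩

lemma not_rowDomIn_add_one {X : Finset (Fin 2)} {Y : Finset (Fin n)} (hY : Y.Nonempty)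
    {x : Fin 2} (h : RowDomIn R X Y x) : ¬ RowDomIn R X Y (x + 1) := by
  rw [rowDomIn_two_iff R hY] at h ⊢
  rintro ⟨-, h'⟩
  obtain ⟨j, hj⟩ := hY
  rw [fin_two_add_one_add_one] at h'
  exact lt_asymm (h.2 j hj) (h' j hj)

open Classical in
lemma filter_not_rowDomIn_eq_singleton {Y : Finset (Fin n)} (hY : Y.Nonempty) {x : Fin 2}
    (h : RowDomIn R univ Y x) : univ.filter (fun i => ¬ RowDomIn R univ Y i) = {x + 1} := by
  ext i
  obtain rfl | rfl := fin_two_eq_or_eq_add_one i x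
  · simp [h, (fin_two_add_one_ne i).symm]
  · simp [not_rowDomIn_add_one R hY h]

open Classical in
lemma elimStep_univ_univ :
    elimStep R C (univ, univ)
      = (univ.filter fun i => ¬ RowDomIn R univ univ i, paretoFrontier C) :=
  Prod.ext rfl (filter_congr fun j _ => by simp [ColDomIn, Fin.forall_fin_two])

open Classical in
lemma elimStep_univ_paretoFrontier :
    elimStep R C (univ, paretoFrontier C)
      = (univ.filter fun i => ¬ RowDomIn R univ (paretoFrontier C) i, paretoFrontier C) := by
  refine Prod.ext rfl (filter_true_of_mem fun j hj ⟨j', _, hlt⟩ => ?_)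
  simp only [paretoFrontier, mem_filter, mem_univ, true_and, not_exists] at hj
  exact hj j' ⟨hlt 0 (mem_univ _), hlt 1 (mem_univ _)⟩

lemma exists_elimStep_singleton_eq {Y : Finset (Fin n)} (hY : Y.Nonempty) {c : Fin 2}
    (hC : Function.Injective (C c)) : ∃ j, elimStep R C ({c}, Y) = ({c}, {j}) := by
  obtain ⟨j, hjY, hmax⟩ := Y.exists_max_image (C c) hY
  refine ⟨j, Prod.ext ?_ ?_⟩
  · simpa [elimStep, RowDomIn] using hY.exists_mem
  · ext j'
    simp only [elimStep, ColDomIn, mem_filter, mem_singleton, forall_eq, not_exists, not_and,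
      not_lt]
    refine ⟨fun ⟨hj', hle⟩ => hC (le_antisymm (hmax j' hj') (hle j hjY)), ?_⟩
    rintro rfl
    exact ⟨hjY, hmax⟩

lemma not_solvable_of_forall_not_rowDomIn
    (h_undom : ∀ x, ¬ RowDomIn R univ (paretoFrontier C) x) : ¬ Solvable R C := by
  classical
  have h_undom_univ (i : Fin 2) : ¬ RowDomIn R univ univ i :=
    fun h => h_undom i (h.of_subset (subset_univ _))
  have h_fixed : elimStep R C (univ, paretoFrontier C) = (univ, paretoFrontier C) := by
    rw [elimStep_univ_paretoFrontier, filter_true_of_mem fun i _ => h_undom i]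
  have h_surv : survivorsFrom R C (univ, univ) = (univ, paretoFrontier C) :=
    survivorsFrom_eq_of_iterate_eq R C (k := 1) (by omega)
      (by rw [Function.iterate_one, elimStep_univ_univ,
        filter_true_of_mem fun i _ => h_undom_univ i])
      h_fixed
  intro hsolv
  have := hsolv.1
  rw [h_surv] at this
  simp at this

lemma solvable_of_rowDomIn (hn : 0 < n) (hC : ∀ i, Function.Injective (C i)) {x : Fin 2}
    (hx : RowDomIn R univ (paretoFrontier C) x) : Solvable R C := by
  classical
  have hF := paretoFrontier_nonempty hn C
  obtain ⟨j, hj⟩ := exists_elimStep_singleton_eq R C hF (hC (x + 1))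
  suffices ∃ k ≤ 2, (elimStep R C)^[k] (univ, univ) = ({x + 1}, paretoFrontier C) by
    obtain ⟨k, hk, hk_eq⟩ := this
    have h_surv : survivorsFrom R C (univ, univ) = ({x + 1}, {j}) :=
      survivorsFrom_eq_of_iterate_eq R C (k := k + 1) (by omega)
        (by rw [Function.iterate_succ_apply', hk_eq, hj]) (elimStep_singleton_singleton R C _ _)
    simp [Solvable, SolvableFrom, h_surv]
  by_cases hx_univ : RowDomIn R univ univ x
  · refine ⟨1, by omega, ?_⟩
    rw [Function.iterate_one, elimStep_univ_univ,
      filter_not_rowDomIn_eq_singleton R (hF.mono (subset_univ _)) hx_univ]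
  · have h_undom (i : Fin 2) : ¬ RowDomIn R univ univ i := by
      obtain rfl | rfl := fin_two_eq_or_eq_add_one i x
      · exact hx_univ
      · exact fun h => not_rowDomIn_add_one R hF hx (h.of_subset (subset_univ _))
    refine ⟨2, le_rfl, ?_⟩
    rw [Function.iterate_succ_apply', Function.iterate_one, elimStep_univ_univ,
      filter_true_of_mem fun i _ => h_undom i, elimStep_univ_paretoFrontier,
      filter_not_rowDomIn_eq_singleton R hF hx]

theorem solvable_iff_exists_rowDomIn_paretoFrontier (hn : 0 < n)
    (hC : ∀ i, Function.Injective (C i)) :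
    Solvable R C ↔ ∃ x, RowDomIn R univ (paretoFrontier C) x :=
  ⟨fun h => by_contra fun h' => not_solvable_of_forall_not_rowDomIn R C (not_exists.1 h') h,
    fun ⟨_, hx⟩ => solvable_of_rowDomIn R C hn hC hx⟩

end TwoRowGames

lemma Fintype.sum_pi_fin_two_mul_inv {G M : Type*} [Group G] [Fintype G] [AddCommMonoid M]
    (f : G → M) : ∑ b : Fin 2 → G, f (b 1 * (b 0)⁻¹) = Fintype.card G • ∑ g, f g := by
  rw [← (piFinTwoEquiv fun _ => G).symm.sum_comp, Fintype.sum_prod_type]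
  simp only [piFinTwoEquiv_symm_apply, Fin.cons_zero, Fin.cons_one]
  calc ∑ x : G, ∑ y : G, f (y * x⁻¹) = ∑ _x : G, ∑ g, f g :=
        Finset.sum_congr rfl fun x _ => Equiv.sum_comp (Equiv.mulRight x⁻¹) f
    _ = Fintype.card G • ∑ g, f g := by rw [sum_const, card_univ]

section RandomGame

variable {n : ℕ}

open Equiv Nat

lemma rowDomIn_rPay_iff (ω : Omega 2 n) {Y : Finset (Fin n)} (hY : Y.Nonempty) (x : Fin 2) :
    RowDomIn (RPay ω) univ Y x ↔ ∀ j ∈ Y, ω.1 j 0 = x := by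
  simp [rowDomIn_two_iff _ hY, RPay, ← Perm.fin_two_apply_lt_apply_add_one_iff]

lemma paretoFrontier_cPay (ω : Omega 2 n) :
    paretoFrontier (CPay ω) = paretoFrontier (ω.2 · ·) :=
  paretoFrontier_comp_strictMono (Nat.strictMono_cast.comp Fin.val_strictMono) _

theorem gameSolvable_iff (hn : 0 < n) (ω : Omega 2 n) :
    GameSolvable ω ↔ ∃ x : Fin 2, ∀ j ∈ paretoFrontier (ω.2 · ·), ω.1 j 0 = x := by
  have hC (i : Fin 2) : Function.Injective (CPay ω i) := fun j j' h =>
    (ω.2 i).injective (Fin.ext (by simpa [CPay] using h))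
  rw [GameSolvable, solvable_iff_exists_rowDomIn_paretoFrontier _ _ hn hC, paretoFrontier_cPay]
  simp_rw [rowDomIn_rPay_iff ω (paretoFrontier_nonempty hn _)]

lemma card_filter_forall_mem_apply_zero_eq (S : Finset (Fin n)) (x : Fin 2) :
    #(univ.filter fun a : Fin n → Perm (Fin 2) => ∀ j ∈ S, a j 0 = x) = 2 ^ (n - #S) := by
  have h_pi : (univ.filter fun a : Fin n → Perm (Fin 2) => ∀ j ∈ S, a j 0 = x)
      = Fintype.piFinset fun j => univ.filter fun g : Perm (Fin 2) => j ∈ S → g 0 = x := by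
    ext a
    simp
  have h_card (j : Fin n) :
      #(univ.filter fun g : Perm (Fin 2) => j ∈ S → g 0 = x) = if j ∈ S then 1 else 2 := by
    split_ifs with hj
    · simp only [hj, true_implies, Perm.card_filter_fin_two_apply_zero_eq]
    · simp only [hj, false_implies, filter_true]
      rfl
  simp [h_pi, h_card, prod_ite, filter_notMem_eq_sdiff, card_sdiff]

lemma card_filter_exists_forall_mem_apply_zero_eq {S : Finset (Fin n)} (hS : S.Nonempty) :
    #(univ.filter fun a : Fin n → Perm (Fin 2) => ∃ x, ∀ j ∈ S, a j 0 = x)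
      = 2 * 2 ^ (n - #S) := by
  have h_union : (univ.filter fun a : Fin n → Perm (Fin 2) => ∃ x, ∀ j ∈ S, a j 0 = x)
      = univ.biUnion fun x => univ.filter fun a => ∀ j ∈ S, a j 0 = x := by
    ext a
    simp
  rw [h_union, card_biUnion]
  · simp [card_filter_forall_mem_apply_zero_eq]
  · intro x _ y _ hxy
    obtain ⟨j, hj⟩ := hS
    exact disjoint_filter.2 fun a _ hx hy => hxy ((hx j hj).symm.trans (hy j hj))

open Classical in
theorem card_filter_gameSolvable (hn : 0 < n) :
    #(univ.filter fun ω : Omega 2 n => GameSolvable ω)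
      = 2 * n ! * ∏ k ∈ range n, (2 * k + 1) := by
  calc #(univ.filter fun ω : Omega 2 n => GameSolvable ω)
      = ∑ b : Fin 2 → Perm (Fin n), #(univ.filter fun a : Fin n → Perm (Fin 2) =>
          ∃ x, ∀ j ∈ paretoFrontier (b · ·), a j 0 = x) := by
        simp only [filter_congr fun ω _ => gameSolvable_iff hn ω, card_filter]
        exact Fintype.sum_prod_type_right _
    _ = ∑ b : Fin 2 → Perm (Fin n), 2 * 2 ^ (n - #(b 1 * (b 0)⁻¹).rightToLeftMaxima) := by
        refine sum_congr rfl fun b _ => ?_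
        rw [card_filter_exists_forall_mem_apply_zero_eq (paretoFrontier_nonempty hn _),
          card_paretoFrontier_eq_card_rightToLeftMaxima]
    _ = 2 * n ! * ∏ k ∈ range n, (2 * k + 1) := by
        rw [Fintype.sum_pi_fin_two_mul_inv fun π : Perm (Fin n) =>
            2 * 2 ^ (n - #π.rightToLeftMaxima),
          ← mul_sum, Perm.sum_two_pow_sub_card_rightToLeftMaxima, Fintype.card_perm,
          Fintype.card_fin, smul_eq_mul]
        ring

theorem probSolvable_two (hn : 0 < n) :
    probSolvable 2 n = 2 * (∏ k ∈ range n, (2 * k + 1 : ℝ)) / (2 ^ n * n !) := by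
  classical
  rw [probSolvable, Pr, Set.Finite.toFinset_ofPred, card_filter_gameSolvable hn]
  simp only [Fintype.card_prod, Fintype.card_pi, Fintype.card_perm, Fintype.card_fin,
    factorial_two, prod_const, Finset.card_univ, cast_mul, cast_ofNat, cast_prod, cast_add,
    cast_one, cast_pow]
  field_simp

end RandomGame

/-- The probability of strict-dominance solvability of `G(2,n)` is strictly
decreasing in `n`: for every `n ≥ 1`, `π(2,n+1) < π(2,n)`. -/
theorem stmt3 (n : ℕ) (hn : 1 ≤ n) :
    probSolvable 2 (n + 1) < probSolvable 2 n := by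
  have h_pos : 0 < probSolvable 2 n := by
    rw [probSolvable_two hn]
    positivity
  calc probSolvable 2 (n + 1) = (2 * n + 1) / (2 * n + 2) * probSolvable 2 n := by
        rw [probSolvable_two hn, probSolvable_two n.succ_pos, prod_range_succ, pow_succ,
          Nat.factorial_succ]
        generalize ∏ k ∈ range n, (2 * k + 1 : ℝ) = P
        push_cast
        field_simp
    _ < probSolvable 2 n :=
        mul_lt_of_lt_one_left h_pos ((div_lt_one (by positivity)).2 (by linarith))
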